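/- Let n ≥ 1, let V = {1,…,n}, let E be a set of pairs (j,k) with j < k, let w_{jk} ≥ 0 for (j,k) ∈ E and μ_j ∈ ℝ for j ∈ V. Define F : ℝ^n → ℝ by F(z_1,…,z_n) = −(1/4)·Σ_{(j,k)∈E} w_{jk}·(z_j + z_k + z_j z_k) + (1/2)·Σ_{j∈V} μ_j z_j. Then for every assignment z ∈ {−1,+1}^n and every p ∈ [0,1]: max(F(p z_1,…,p z_n), F(−p z_1,…,−p z_n)) ≥ p²·max(F(z_1,…,z_n), F(−z_1,…,−z_n)). In particular, if y ∈ {−1,+1}^n maximizes F over {−1,+1}^n, then F(p y_1,…,p y_n) ≥ p²·F(y_1,…,y_n) for all p ∈ [0,1]. -/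
import Mathlib


noncomputable section

private lemma cost_decomp (n : ℕ) (E : Finset (Fin n × Fin n))
    (w : Fin n × Fin n → ℝ) (μ : Fin n → ℝ) (z : Fin n → ℝ) (p : ℝ) :
    -(1/4) * ∑ e ∈ E, w e * (p * z e.1 + p * z e.2 + (p * z e.1) * (p * z e.2))
      + (1/2) * ∑ j, μ j * (p * z j)
    = p * (-(1/4) * ∑ e ∈ E, w e * (z e.1 + z e.2) + (1/2) * ∑ j, μ j * z j)
      + p ^ 2 * (-(1/4) * ∑ e ∈ E, w e * (z e.1 * z e.2)) := by
  have h1 : ∑ e ∈ E, w e * (p * z e.1 + p * z e.2 + (p * z e.1) * (p * z e.2))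
      = p * ∑ e ∈ E, w e * (z e.1 + z e.2) + p ^ 2 * ∑ e ∈ E, w e * (z e.1 * z e.2) := by
    rw [Finset.mul_sum, Finset.mul_sum, ← Finset.sum_add_distrib]
    exact Finset.sum_congr rfl fun e _ => by ring
  have h2 : ∑ j, μ j * (p * z j) = p * ∑ j, μ j * z j := by
    rw [Finset.mul_sum]
    exact Finset.sum_congr rfl fun j _ => by ring
  rw [h1, h2]; ring

/-- Scaling behaviour of the traceless classical cost function
`F(z) = -(1/4)Σ_{(j,k)∈E} w_{jk}(z_j + z_k + z_j z_k) + (1/2)Σ_j μ_j z_j`. -/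
theorem classical_cost_scaling
    (n : ℕ) (hn : 1 ≤ n)
    (E : Finset (Fin n × Fin n)) (hE : ∀ e ∈ E, e.1 < e.2)
    (w : Fin n × Fin n → ℝ) (hw : ∀ e ∈ E, 0 ≤ w e)
    (μ : Fin n → ℝ)
    (F : (Fin n → ℝ) → ℝ)
    (hF : ∀ z, F z = -(1/4) * ∑ e ∈ E, w e * (z e.1 + z e.2 + z e.1 * z e.2)
        + (1/2) * ∑ j, μ j * z j) :
    (∀ z : Fin n → ℝ, (∀ j, z j = 1 ∨ z j = -1) → ∀ p ∈ Set.Icc (0:ℝ) 1,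
      max (F (fun j => p * z j)) (F (fun j => -(p * z j)))
        ≥ p ^ 2 * max (F z) (F (fun j => -(z j)))) ∧
    (∀ y : Fin n → ℝ, (∀ j, y j = 1 ∨ y j = -1) →
      (∀ z : Fin n → ℝ, (∀ j, z j = 1 ∨ z j = -1) → F z ≤ F y) →
      ∀ p ∈ Set.Icc (0:ℝ) 1, F (fun j => p * y j) ≥ p ^ 2 * F y) := by
  -- key decomposition: F(p • z) = p * L z + p^2 * Q z
  have key : ∀ (z : Fin n → ℝ) (p : ℝ),
      F (fun j => p * z j)
      = p * (-(1/4) * ∑ e ∈ E, w e * (z e.1 + z e.2) + (1/2) * ∑ j, μ j * z j)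
        + p ^ 2 * (-(1/4) * ∑ e ∈ E, w e * (z e.1 * z e.2)) := by
    intro z p
    rw [hF]
    exact cost_decomp n E w μ z p
  have keyneg : ∀ (z : Fin n → ℝ) (p : ℝ),
      F (fun j => -(p * z j))
      = -p * (-(1/4) * ∑ e ∈ E, w e * (z e.1 + z e.2) + (1/2) * ∑ j, μ j * z j)
        + p ^ 2 * (-(1/4) * ∑ e ∈ E, w e * (z e.1 * z e.2)) := by
    intro z p
    have := key z (-p)
    simp only [neg_mul] at this ⊢
    rw [show (fun j => -(p * z j)) = (fun j => -p * z j) by funext j; ring] at this ⊢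
    rw [this]; ring
  have key1 : ∀ (z : Fin n → ℝ),
      F z = (-(1/4) * ∑ e ∈ E, w e * (z e.1 + z e.2) + (1/2) * ∑ j, μ j * z j)
        + (-(1/4) * ∑ e ∈ E, w e * (z e.1 * z e.2)) := by
    intro z
    have := key z 1
    simpa using this
  have keyneg1 : ∀ (z : Fin n → ℝ),
      F (fun j => -(z j)) = -(-(1/4) * ∑ e ∈ E, w e * (z e.1 + z e.2) + (1/2) * ∑ j, μ j * z j)
        + (-(1/4) * ∑ e ∈ E, w e * (z e.1 * z e.2)) := by
    intro z
    have := keyneg z 1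
    simp only [one_mul, one_pow, neg_mul] at this
    linarith [this]
  constructor
  · intro z _ p hp
    obtain ⟨hp0, hp1⟩ := hp
    rw [key z p, keyneg z p, key1 z, keyneg1 z]
    generalize (-(1/4) * ∑ e ∈ E, w e * (z e.1 + z e.2) + (1/2) * ∑ j, μ j * z j) = L
    generalize (-(1/4) * ∑ e ∈ E, w e * (z e.1 * z e.2)) = Q
    rcases le_total 0 L with h | h
    · have hmax : max (L + Q) (-L + Q) = L + Q := max_eq_left (by linarith)
      rw [hmax]
      refine le_trans ?_ (le_max_left _ _)
      nlinarith [mul_nonneg (mul_nonneg hp0 (by linarith : (0:ℝ) ≤ 1 - p)) h]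
    · have hmax : max (L + Q) (-L + Q) = -L + Q := max_eq_right (by linarith)
      rw [hmax]
      refine le_trans ?_ (le_max_right _ _)
      nlinarith [mul_nonneg (mul_nonneg hp0 (by linarith : (0:ℝ) ≤ 1 - p)) (by linarith : (0:ℝ) ≤ -L)]
  · intro y hy hmax p hp
    obtain ⟨hp0, hp1⟩ := hp
    have hny : ∀ j, (fun j => -(y j)) j = 1 ∨ (fun j => -(y j)) j = -1 := by
      intro j; rcases hy j with h | h <;> simp [h]
    have hle := hmax (fun j => -(y j)) hny
    rw [key1 y] at hle ⊢
    rw [keyneg1 y] at hle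
    rw [key y p]
    revert hle
    generalize (-(1/4) * ∑ e ∈ E, w e * (y e.1 + y e.2) + (1/2) * ∑ j, μ j * y j) = L
    generalize (-(1/4) * ∑ e ∈ E, w e * (y e.1 * y e.2)) = Q
    intro hle
    nlinarith [mul_nonneg (mul_nonneg hp0 (by linarith : (0:ℝ) ≤ 1 - p)) (by linarith : (0:ℝ) ≤ L)]

end
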